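/- For every triple of positive integers k, ℓ, r with k ≥ r ≥ 3 and ℓ ≤ C(r,2)·⌈k/r⌉² / ⌊k/r⌋ (where C(r,2) denotes the binomial coefficient r choose 2), there exists a positive integer N = N(k,ℓ,r) such that for every integer n ≥ N, rx_{k,ℓ}(K_{r×n}) = k or rx_{k,ℓ}(K_{r×n}) = k + 1. -/

import Mathlib

open SimpleGraph

/-- `T` is a rainbow `S`-tree in `G` under edge-coloring `c`:
its vertices contain `S`, it is a tree, and `c` is injective on its edges. -/
def IsRainbowSTree {V β : Type*} (G : SimpleGraph V) (c : Sym2 V → β)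
    (S : Set V) (T : G.Subgraph) : Prop :=
  S ⊆ T.verts ∧ T.coe.IsTree ∧ Set.InjOn c T.edgeSet

/-- A family of `S`-trees is internally disjoint: pairwise edge-disjoint, and
the vertex sets of two distinct members meet exactly in `S`. -/
def InternallyDisjoint {V : Type*} {G : SimpleGraph V} (S : Set V)
    {ι : Type*} (T : ι → G.Subgraph) : Prop :=
  ∀ i j, i ≠ j → (T i).edgeSet ∩ (T j).edgeSet = ∅ ∧ (T i).verts ∩ (T j).verts = S

/-- The coloring `c` provides, for every set `S` of `k` vertices,
`ℓ` internally disjoint rainbow `S`-trees. -/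
def HasRainbowSTrees {V β : Type*} (G : SimpleGraph V) (c : Sym2 V → β) (k ℓ : ℕ) : Prop :=
  ∀ S : Finset V, S.card = k →
    ∃ T : Fin ℓ → G.Subgraph,
      (∀ i, IsRainbowSTree G c (S : Set V) (T i)) ∧ InternallyDisjoint (S : Set V) T

/-- The `(k,ℓ)`-rainbow index `rx_{k,ℓ}(G)`: the minimum number `t` of colors such that
some edge-coloring of `G` with `t` colors gives, for every `k`-set `S`,
`ℓ` internally disjoint rainbow `S`-trees. -/
noncomputable def rainbowIndex {V : Type*} (G : SimpleGraph V) (k ℓ : ℕ) : ℕ :=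
  sInf {t : ℕ | ∃ c : Sym2 V → Fin t, HasRainbowSTrees G c k ℓ}

open Finset Filter Function

/-!
A rainbow `S`-tree for `k` vertices `S` of one part must leave that part, so it has at least
`k + 1` vertices and hence `k` edges of distinct colors: `rx_{k,ℓ} ≥ k` once `n ≥ k`.

For the upper bound color the edges of `K_{r×n}` uniformly at random with `k + 1` colors. Given
a `k`-set `S` and a column `u` (a vertex index) not used by `S`, the vertices `(0, u)` and
`(1, u)` are adjacent, and hanging every `z ∈ S` from whichever of them lies outside the part of
`z` gives a double star: an `S`-tree with `k + 1` edges. Double stars in distinct free columns are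
internally disjoint with disjoint edge sets, so each is rainbow independently with probability
`(k + 1)! / (k + 1) ^ (k + 1)`. Split `ℓ m ≤ n - k` free columns into `ℓ` groups of `m`; a group
contains no rainbow double star with probability exponentially small in `m ≈ n / ℓ`, while there
are only `C(rn, k) ℓ` pairs of `S` and a group. For large `n` the union bound leaves a coloring in
which every group of every `S` contains a rainbow double star.
-/

section Counting

variable {U α : Type*}

lemma card_not_injective [Fintype α] (X : Type*) [Fintype X] [DecidableEq X] :
    Nat.card {f : X → α // ¬ Injective f} =
      Fintype.card α ^ Fintype.card X - (Fintype.card α).descFactorial (Fintype.card X) := by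
  classical
  rw [Nat.card_eq_fintype_card, Fintype.card_subtype_compl, Fintype.card_fun,
    Fintype.card_congr (Equiv.subtypeInjectiveEquivEmbedding X α), Fintype.card_embedding_eq]

lemma card_forall_fiber [Fintype U] [Fintype α] {κ : Type*} [Fintype κ] (g : U → κ)
    (P : ∀ j, ({x // g x = j} → α) → Prop) :
    Nat.card {c : U → α // ∀ j, P j fun x => c x} = ∏ j, Nat.card {f // P j f} := by
  let e : (U → α) ≃ ∀ j, ({x // g x = j} → α) :=
    ((Equiv.sigmaFiberEquiv g).arrowCongr (Equiv.refl α)).symm.trans (Equiv.piCurry fun _ _ => α)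
  rw [← Nat.card_pi]
  exact Nat.card_congr ((Equiv.subtypeEquiv (q := fun f => ∀ j, P j (f j)) e fun _ => Iff.rfl).trans
    Equiv.subtypePiEquivPi)

lemma exists_fiber_eq_some_iff {m : ℕ} (F : Fin m → Set U) (hF : Pairwise (Disjoint on F)) :
    ∃ g : U → Option (Fin m), ∀ x i, g x = some i ↔ x ∈ F i := by
  classical
  refine ⟨fun x => if h : ∃ i, x ∈ F i then some h.choose else none, fun x i => ?_⟩
  dsimp only
  split_ifs with h
  · refine ⟨fun hi => Option.some_inj.mp hi ▸ h.choose_spec, fun hx => ?_⟩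
    by_contra hne
    exact Set.disjoint_left.mp (hF fun he => hne (congrArg some he)) h.choose_spec hx
  · simpa using fun hx => h ⟨i, hx⟩

/-- Under a uniformly random coloring with `a` colors an `e`-set fails to be rainbow with
probability `(a ^ e - a (a - 1) ⋯ (a - e + 1)) / a ^ e`, independently on disjoint sets. -/
lemma card_forall_not_injOn [Fintype U] [DecidableEq U] [Fintype α] {m e : ℕ}
    (F : Fin m → Finset U) (hF : Pairwise (Disjoint on F)) (hcard : ∀ i, #(F i) = e) :
    Nat.card {c : U → α // ∀ i, ¬ Set.InjOn c (F i)} * (Fintype.card α ^ e) ^ m =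
      (Fintype.card α ^ e - (Fintype.card α).descFactorial e) ^ m *
        Fintype.card α ^ Fintype.card U := by
  classical
  obtain ⟨g, hg⟩ := exists_fiber_eq_some_iff (fun i => (F i : Set U))
    fun i j hij => Finset.disjoint_coe.mpr (hF hij)
  have hfiber : ∀ i, {x | g x = some i} = F i := fun i => Set.ext fun x => hg x i
  have hcard_fiber : ∀ i, Fintype.card {x // g x = some i} = e := fun i => by
    rw [← hcard i, ← Fintype.card_coe]
    exact Fintype.card_congr (Equiv.subtypeEquivRight fun x => (hg x i).trans Finset.mem_coe)
  let P : ∀ j, ({x // g x = j} → α) → Prop := fun j f => j.elim True fun _ => ¬ Injective f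
  have hbad : ∀ c : U → α, (∀ i, ¬ Set.InjOn c (F i)) ↔ ∀ j, P j fun x => c x := fun c => by
    simp only [P, Option.forall, Option.elim, true_and, ← hfiber]
    exact forall_congr' fun i => not_congr Set.injOn_iff_injective
  have hU : Fintype.card U = Fintype.card {x // g x = none} + m * e := by
    rw [← Fintype.card_congr (Equiv.sigmaFiberEquiv g), Fintype.card_sigma, Fintype.sum_option]
    simp [hcard_fiber]
  rw [Nat.card_congr (Equiv.subtypeEquivRight hbad), card_forall_fiber, Fintype.prod_option]
  simp only [P, Option.elim, card_not_injective, hcard_fiber]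
  simp only [Nat.card_eq_fintype_card, Fintype.card_subtype_true, Fintype.card_fun, prod_const,
    card_univ, Fintype.card_fin, hU, pow_add, pow_mul]
  ring

lemma exists_forall_exists_injOn [Fintype U] [DecidableEq U] [Fintype α] [Nonempty α]
    {ι : Type*} [Fintype ι] {m e : ℕ}
    (F : ι → Fin m → Finset U) (hF : ∀ x, Pairwise (Disjoint on F x))
    (hcard : ∀ x i, #(F x i) = e)
    (hsmall : Fintype.card ι * (Fintype.card α ^ e - (Fintype.card α).descFactorial e) ^ m <
      (Fintype.card α ^ e) ^ m) :
    ∃ c : U → α, ∀ x, ∃ i, Set.InjOn c (F x i) := by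
  classical
  by_contra! hbad
  set bad : ι → Finset (U → α) := fun x => univ.filter fun c => ∀ i, ¬ Set.InjOn c (F x i)
  have hcover : (univ : Finset (U → α)) ⊆ univ.biUnion bad := fun c _ => by
    obtain ⟨x, hx⟩ := hbad c
    exact mem_biUnion.mpr ⟨x, mem_univ x, mem_filter.mpr ⟨mem_univ c, hx⟩⟩
  have hbad_card : ∀ x, #(bad x) * (Fintype.card α ^ e) ^ m =
      (Fintype.card α ^ e - (Fintype.card α).descFactorial e) ^ m *
        Fintype.card α ^ Fintype.card U := fun x => by
    rw [← card_forall_not_injOn (F x) (hF x) (hcard x), Nat.card_eq_fintype_card,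
      Fintype.card_subtype]
  have hpos : 0 < Fintype.card α ^ Fintype.card U := pow_pos Fintype.card_pos _
  exact lt_irrefl _ (calc (Fintype.card α ^ e) ^ m * Fintype.card α ^ Fintype.card U
    _ = Fintype.card α ^ Fintype.card U * (Fintype.card α ^ e) ^ m := mul_comm _ _
    _ ≤ (∑ x, #(bad x)) * (Fintype.card α ^ e) ^ m := by
        gcongr
        simpa [Fintype.card_fun] using (card_le_card hcover).trans card_biUnion_le
    _ = Fintype.card ι * (Fintype.card α ^ e - (Fintype.card α).descFactorial e) ^ m *
        Fintype.card α ^ Fintype.card U := by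
        simp [sum_mul, hbad_card, mul_assoc]
    _ < (Fintype.card α ^ e) ^ m * Fintype.card α ^ Fintype.card U := by gcongr)

end Counting

lemma eventually_mul_pow_mul_pow_lt (C j : ℕ) {a b : ℕ} (hab : a < b) :
    ∀ᶠ m in atTop, C * m ^ j * a ^ m < b ^ m := by
  have hb : (0 : ℝ) < b := by exact_mod_cast (Nat.zero_le a).trans_lt hab
  have hlim := (tendsto_pow_const_mul_const_pow_of_lt_one j (by positivity : (0 : ℝ) ≤ a / b)
    ((div_lt_one hb).mpr (by exact_mod_cast hab))).const_mul (C : ℝ)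
  rw [mul_zero] at hlim
  filter_upwards [hlim.eventually (gt_mem_nhds one_pos)] with m hm
  rw [div_pow, ← mul_assoc, mul_div_assoc', div_lt_one (by positivity)] at hm
  exact_mod_cast hm

lemma eventually_choose_mul_pow_lt {q p : ℕ} (hqp : q < p) (r k : ℕ) {ℓ : ℕ} (hℓ : 0 < ℓ) :
    ∀ᶠ n in atTop, (r * n).choose k * ℓ * q ^ ((n - k) / ℓ) < p ^ ((n - k) / ℓ) := by
  have hm : Tendsto (fun n => (n - k) / ℓ) atTop atTop :=
    (Nat.tendsto_div_const_atTop hℓ.ne').comp (tendsto_sub_atTop_nat k)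
  filter_upwards [hm.eventually (eventually_mul_pow_mul_pow_lt ((r * (2 * ℓ + k)) ^ k * ℓ) k hqp),
    hm.eventually (eventually_ge_atTop 1)] with n hgrowth hm1
  set m := (n - k) / ℓ
  have hn : n ≤ (2 * ℓ + k) * m := by
    have h1 : n - k < ℓ * m + ℓ := Nat.lt_mul_div_succ (n - k) hℓ
    have h2 : ℓ ≤ ℓ * m := Nat.le_mul_of_pos_right ℓ hm1
    have h3 : k ≤ k * m := Nat.le_mul_of_pos_right k hm1
    rw [add_mul, mul_assoc]
    omega
  calc (r * n).choose k * ℓ * q ^ m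
    _ ≤ (r * (2 * ℓ + k)) ^ k * m ^ k * ℓ * q ^ m := by
      gcongr
      calc (r * n).choose k ≤ (r * n) ^ k := Nat.choose_le_pow _ _
        _ ≤ (r * (2 * ℓ + k) * m) ^ k := by rw [mul_assoc]; gcongr
        _ = _ := mul_pow _ _ _
    _ = (r * (2 * ℓ + k)) ^ k * ℓ * m ^ k * q ^ m := by ring
    _ < p ^ m := hgrowth

lemma exists_injective_forall_notMem {κ β : Type*} [Fintype κ] [Fintype β] [DecidableEq β]
    (X : Finset β) (h : Fintype.card κ + #X ≤ Fintype.card β) :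
    ∃ u : κ → β, Injective u ∧ ∀ x, u x ∉ X := by
  obtain ⟨f⟩ := Embedding.nonempty_of_card_le (α := κ) (β := {u // u ∉ X}) (by
    rw [Fintype.card_subtype_compl, Fintype.card_coe]
    omega)
  exact ⟨fun x => f x, Subtype.val_injective.comp f.injective, fun x => (f x).2⟩

lemma SimpleGraph.Subgraph.coe_isTree_iff {V : Type*} {G : SimpleGraph V} {H : G.Subgraph}
    [Finite H.verts] : H.coe.IsTree ↔ H.Connected ∧ H.edgeSet.ncard + 1 = H.verts.ncard := by
  rw [isTree_iff_connected_and_card, ← H.image_coe_edgeSet_coe,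
    Set.ncard_image_of_injective _ (Sym2.map.injective Subtype.val_injective),
    Nat.card_coe_set_eq, Nat.card_coe_set_eq, Subgraph.connected_iff']

section DoubleStar

variable {ι : Type*} {V : ι → Type*} [DecidableEq ι] {a b : Σ i, V i}

def doubleStarHub (a b z : Σ i, V i) : Σ i, V i := if z.1 = a.1 then b else a

lemma doubleStarHub_eq_or_eq (a b z : Σ i, V i) :
    doubleStarHub a b z = a ∨ doubleStarHub a b z = b := by
  unfold doubleStarHub
  split_ifs <;> simp

lemma adj_doubleStarHub (hab : a.1 ≠ b.1) (z : Σ i, V i) :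
    (completeMultipartiteGraph V).Adj z (doubleStarHub a b z) := by
  unfold doubleStarHub
  split_ifs with h
  · simpa [h] using hab
  · simpa using h

lemma doubleStarHub_notMem {S : Finset (Σ i, V i)} (ha : a ∉ S) (hb : b ∉ S) (z : Σ i, V i) :
    doubleStarHub a b z ∉ S := by
  rcases doubleStarHub_eq_or_eq a b z with h | h <;> rwa [h]

variable [∀ i, DecidableEq (V i)] {S : Finset (Σ i, V i)}

/-- Edges of the double star with adjacent centers `a`, `b` in which each leaf `z ∈ S` hangs
from `doubleStarHub a b z`, a center outside the part of `z`. -/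
def doubleStarEdges (a b : Σ i, V i) (S : Finset (Σ i, V i)) : Finset (Sym2 (Σ i, V i)) :=
  insert s(a, b) (S.image fun z => s(z, doubleStarHub a b z))

lemma mem_doubleStarEdges {e : Sym2 (Σ i, V i)} :
    e ∈ doubleStarEdges a b S ↔ e = s(a, b) ∨ ∃ z ∈ S, s(z, doubleStarHub a b z) = e := by
  simp [doubleStarEdges]

lemma center_mem_of_mem_doubleStarEdges {e : Sym2 (Σ i, V i)} (he : e ∈ doubleStarEdges a b S) :
    a ∈ e ∨ b ∈ e := by
  rcases mem_doubleStarEdges.mp he with rfl | ⟨z, -, rfl⟩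
  · simp
  · rcases doubleStarHub_eq_or_eq a b z with h | h <;> simp [h]

lemma mem_of_mem_doubleStarEdges {e : Sym2 (Σ i, V i)} (he : e ∈ doubleStarEdges a b S)
    {x : Σ i, V i} (hx : x ∈ e) : x ∈ insert a (insert b S) := by
  rcases mem_doubleStarEdges.mp he with rfl | ⟨z, hz, rfl⟩
  · rcases Sym2.mem_iff.mp hx with rfl | rfl <;> simp
  · rcases Sym2.mem_iff.mp hx with rfl | rfl
    · simp [hz]
    · rcases doubleStarHub_eq_or_eq a b z with h | h <;> simp [h]

def doubleStar (a b : Σ i, V i) (hab : a.1 ≠ b.1) (S : Finset (Σ i, V i)) :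
    (completeMultipartiteGraph V).Subgraph where
  verts := ↑(insert a (insert b S))
  Adj x y := s(x, y) ∈ doubleStarEdges a b S
  adj_sub {x y} h := by
    rcases mem_doubleStarEdges.mp h with h | ⟨z, -, h⟩
    · rcases Sym2.eq_iff.mp h with ⟨rfl, rfl⟩ | ⟨rfl, rfl⟩
      · simpa using hab
      · simpa using hab.symm
    · rcases Sym2.eq_iff.mp h with ⟨rfl, rfl⟩ | ⟨rfl, rfl⟩
      · exact adj_doubleStarHub hab _
      · exact (adj_doubleStarHub hab _).symm
  edge_vert h := mem_coe.mpr (mem_of_mem_doubleStarEdges h (Sym2.mem_mk_left _ _))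
  symm := ⟨fun x y h => by rwa [Sym2.eq_swap]⟩

lemma card_doubleStarEdges (ha : a ∉ S) (hb : b ∉ S) : #(doubleStarEdges a b S) = #S + 1 := by
  rw [doubleStarEdges, card_insert_of_notMem, card_image_of_injOn]
  · intro z hz z' hz' h
    rcases Sym2.eq_iff.mp h with ⟨h, -⟩ | ⟨h, -⟩
    · exact h
    · exact absurd (h ▸ hz) (doubleStarHub_notMem ha hb z')
  · simp only [mem_image, not_exists, not_and]
    intro z hz h
    rcases Sym2.eq_iff.mp h with ⟨h, -⟩ | ⟨h, -⟩
    · exact ha (h ▸ hz)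
    · exact hb (h ▸ hz)

lemma disjoint_doubleStarEdges {a' b' : Σ i, V i} {S' : Finset (Σ i, V i)}
    (ha : a ∉ insert a' (insert b' S')) (hb : b ∉ insert a' (insert b' S')) :
    Disjoint (doubleStarEdges a b S) (doubleStarEdges a' b' S') := by
  refine disjoint_left.mpr fun e he he' => ?_
  rcases center_mem_of_mem_doubleStarEdges he with h | h
  exacts [ha (mem_of_mem_doubleStarEdges he' h), hb (mem_of_mem_doubleStarEdges he' h)]

variable (hab : a.1 ≠ b.1)
include hab

lemma doubleStar_verts : (doubleStar a b hab S).verts = ↑(insert a (insert b S)) := rfl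

lemma doubleStar_edgeSet : (doubleStar a b hab S).edgeSet = ↑(doubleStarEdges a b S) := by
  ext e
  induction e using Sym2.ind
  rfl

lemma doubleStar_connected : (doubleStar a b hab S).Connected := by
  set T := doubleStar a b hab S
  have hmem : ∀ {x}, x ∈ insert a (insert b S) → x ∈ T.verts := mem_coe.mpr
  have ha : a ∈ T.verts := hmem (mem_insert_self _ _)
  have hb : b ∈ T.verts := hmem (mem_insert_of_mem (mem_insert_self _ _))
  have hab' : T.coe.Reachable ⟨b, hb⟩ ⟨a, ha⟩ :=
    (Subgraph.Adj.coe (by simp [T, doubleStar, doubleStarEdges])).reachable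
  have hcenter : ∀ x (hx : x = a ∨ x = b), T.coe.Reachable ⟨x, hmem (by grind)⟩ ⟨a, ha⟩ := by
    rintro x (rfl | rfl)
    exacts [.rfl, hab']
  rw [Subgraph.connected_iff', connected_iff_exists_forall_reachable]
  refine ⟨⟨a, ha⟩, fun ⟨x, hx⟩ => ?_⟩
  rcases mem_insert.mp (mem_coe.mp hx) with rfl | hx'
  · rfl
  rcases mem_insert.mp hx' with rfl | hxS
  · exact hab'.symm
  have hadj : T.Adj x (doubleStarHub a b x) :=
    mem_insert_of_mem (mem_image_of_mem _ hxS)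
  exact ((hadj.coe.reachable).trans (hcenter _ (doubleStarHub_eq_or_eq a b x))).symm

lemma doubleStar_isTree (ha : a ∉ S) (hb : b ∉ S) : (doubleStar a b hab S).coe.IsTree := by
  have hne : a ≠ b := fun h => hab (congrArg Sigma.fst h)
  have : Finite (doubleStar a b hab S).verts := (insert a (insert b S)).finite_toSet.to_subtype
  rw [Subgraph.coe_isTree_iff, doubleStar_edgeSet, doubleStar_verts, Set.ncard_coe_finset,
    Set.ncard_coe_finset, card_doubleStarEdges ha hb, card_insert_of_notMem (by simp [hne, ha]),
    card_insert_of_notMem hb]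
  exact ⟨doubleStar_connected hab, rfl⟩

lemma doubleStar_verts_inter {a' b' : Σ i, V i} (hab' : a'.1 ≠ b'.1)
    (ha : a ∉ insert a' (insert b' S)) (hb : b ∉ insert a' (insert b' S)) :
    (doubleStar a b hab S).verts ∩ (doubleStar a' b' hab' S).verts = S := by
  ext x
  simp only [doubleStar_verts, coe_insert, Set.mem_inter_iff, Set.mem_insert_iff, mem_coe] at *
  grind

end DoubleStar

section Columns

variable {ι β : Type*} [DecidableEq β] {S : Finset ((_ : ι) × β)} {u w : β}

lemma mk_notMem_of_notMem_image_snd (hu : u ∉ S.image Sigma.snd) (i : ι) :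
    (⟨i, u⟩ : (_ : ι) × β) ∉ S :=
  fun h => hu (mem_image_of_mem _ h)

variable [DecidableEq ι]

lemma mk_notMem_insert_insert (huw : u ≠ w) (hu : u ∉ S.image Sigma.snd) (i i₀ i₁ : ι) :
    (⟨i, u⟩ : (_ : ι) × β) ∉ insert ⟨i₀, w⟩ (insert ⟨i₁, w⟩ S) := by
  simp [huw, mk_notMem_of_notMem_image_snd hu]

/-- The trees are the double stars centered at `⟨i₀, u j⟩` and `⟨i₁, u j⟩`. -/
lemma exists_rainbow_doubleStars {i₀ i₁ : ι} (hi : i₀ ≠ i₁) {α : Type*}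
    (c : Sym2 ((_ : ι) × β) → α) {ℓ : ℕ} (u : Fin ℓ → β) (hu : Injective u)
    (huS : ∀ j, u j ∉ S.image Sigma.snd)
    (hc : ∀ j, Set.InjOn c (doubleStarEdges ⟨i₀, u j⟩ ⟨i₁, u j⟩ S)) :
    ∃ T : Fin ℓ → (completeMultipartiteGraph fun _ : ι => β).Subgraph,
      (∀ j, IsRainbowSTree _ c S (T j)) ∧ InternallyDisjoint (S : Set _) T := by
  have hS j i := mk_notMem_of_notMem_image_snd (huS j) i
  refine ⟨fun j => doubleStar ⟨i₀, u j⟩ ⟨i₁, u j⟩ hi S, fun j => ⟨?_, ?_, ?_⟩,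
    fun j j' hjj' => ⟨?_, ?_⟩⟩
  · intro x hx
    simp [doubleStar_verts, mem_coe.mp hx]
  · exact doubleStar_isTree hi (hS j _) (hS j _)
  · rw [doubleStar_edgeSet]
    exact hc j
  · have huu := hu.ne hjj'
    rw [doubleStar_edgeSet, doubleStar_edgeSet, ← coe_inter,
      disjoint_iff_inter_eq_empty.mp (disjoint_doubleStarEdges
        (mk_notMem_insert_insert huu (huS j) _ _ _) (mk_notMem_insert_insert huu (huS j) _ _ _)),
      coe_empty]
  · have huu := hu.ne hjj'
    exact doubleStar_verts_inter hi hi (mk_notMem_insert_insert huu (huS j) _ _ _)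
      (mk_notMem_insert_insert huu (huS j) _ _ _)

end Columns

lemma le_card_of_hasRainbowSTrees {ι : Type*} {V : ι → Type*} [Finite ι] [∀ i, Finite (V i)]
    {α : Type*} [Finite α] {k ℓ : ℕ} (hk : 2 ≤ k) (hℓ : 0 < ℓ) {i : ι} (hi : k ≤ Nat.card (V i))
    {c : Sym2 (Σ i, V i) → α} (hc : HasRainbowSTrees (completeMultipartiteGraph V) c k ℓ) :
    k ≤ Nat.card α := by
  classical
  have := Fintype.ofFinite (V i)
  obtain ⟨s, -, hs⟩ := exists_subset_card_eq (s := (univ : Finset (V i))) (n := k)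
    (by rwa [card_univ, ← Nat.card_eq_fintype_card])
  set S := s.map (Embedding.sigmaMk i)
  obtain ⟨T, hT, -⟩ := hc S (by simp [S, hs])
  obtain ⟨hST, htree, hinj⟩ := hT ⟨0, hℓ⟩
  obtain ⟨x, hx, y, hy, hxy⟩ := one_lt_card.mp (by simp [S, hs]; omega : 1 < #S)
  have : Nontrivial (T ⟨0, hℓ⟩).verts :=
    nontrivial_of_ne ⟨x, hST hx⟩ ⟨y, hST hy⟩ (by simpa using hxy)
  -- A neighbour of `x` in the tree lies outside the part of `x`, which contains `S`.
  obtain ⟨w, hxw⟩ := (Subgraph.Connected.mk htree.connected).preconnected.exists_adj_of_nontrivial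
    ⟨x, hST hx⟩
  have hwS : w ∉ S := fun hw => by
    simp only [S, Finset.mem_map] at hx hw
    obtain ⟨_, -, rfl⟩ := hx
    obtain ⟨_, -, rfl⟩ := hw
    simpa using (T ⟨0, hℓ⟩).adj_sub hxw
  have hverts : k + 1 ≤ (T ⟨0, hℓ⟩).verts.ncard := by
    calc k + 1 = (insert w S : Set _).ncard := by
          rw [Set.ncard_insert_of_notMem (by simpa using hwS), Set.ncard_coe_finset, card_map, hs]
      _ ≤ _ := Set.ncard_le_ncard (Set.insert_subset ((T ⟨0, hℓ⟩).edge_vert hxw.symm) hST)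
  have hedges := (Subgraph.coe_isTree_iff.mp htree).2
  have hcolors : (T ⟨0, hℓ⟩).edgeSet.ncard ≤ Nat.card α :=
    hinj.ncard_image ▸ Set.ncard_le_card _
  omega

theorem eventually_exists_hasRainbowSTrees {r k ℓ : ℕ} (hr : 2 ≤ r) (hℓ : 0 < ℓ) :
    ∀ᶠ n in atTop, ∃ c : Sym2 ((_ : Fin r) × Fin n) → Fin (k + 1),
      HasRainbowSTrees (completeMultipartiteGraph fun _ : Fin r => Fin n) c k ℓ := by
  classical
  have hqp : (k + 1) ^ (k + 1) - (k + 1).descFactorial (k + 1) < (k + 1) ^ (k + 1) :=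
    Nat.sub_lt (by positivity) (by rw [Nat.descFactorial_self]; positivity)
  filter_upwards [eventually_choose_mul_pow_lt hqp r k hℓ] with n hsmall
  set m := (n - k) / ℓ
  have hcolumns (S : {S : Finset ((_ : Fin r) × Fin n) // #S = k}) :
      ∃ u : Fin ℓ × Fin m → Fin n, Injective u ∧ ∀ x, u x ∉ S.1.image Sigma.snd := by
    refine exists_injective_forall_notMem _ ?_
    have := S.2 ▸ card_image_le (s := S.1) (f := Sigma.snd)
    have : ℓ * m ≤ n - k := Nat.mul_div_le (n - k) ℓ
    have := card_le_univ (S.1.image Sigma.snd)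
    simp only [Fintype.card_prod, Fintype.card_fin] at this ⊢
    omega
  choose u hu hu_S using hcolumns
  obtain ⟨i₀, i₁, hi⟩ : ∃ i₀ i₁ : Fin r, i₀ ≠ i₁ := ⟨⟨0, by omega⟩, ⟨1, by omega⟩, by simp⟩
  obtain ⟨c, hc⟩ := exists_forall_exists_injOn (α := Fin (k + 1))
    (ι := {S : Finset ((_ : Fin r) × Fin n) // #S = k} × Fin ℓ)
    (fun x i => doubleStarEdges ⟨i₀, u x.1 (x.2, i)⟩ ⟨i₁, u x.1 (x.2, i)⟩ x.1.1)
    (fun x i i' hii' => disjoint_doubleStarEdges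
      (mk_notMem_insert_insert ((hu x.1).ne (by simpa using hii')) (hu_S _ _) _ _ _)
      (mk_notMem_insert_insert ((hu x.1).ne (by simpa using hii')) (hu_S _ _) _ _ _))
    (fun x i => x.1.2 ▸ card_doubleStarEdges (mk_notMem_of_notMem_image_snd (hu_S _ _) _)
      (mk_notMem_of_notMem_image_snd (hu_S _ _) _))
    (by simpa using hsmall)
  refine ⟨c, fun S hS => ?_⟩
  choose i hi_inj using fun j => hc (⟨S, hS⟩, j)
  exact exists_rainbow_doubleStars hi c (fun j => u ⟨S, hS⟩ (j, i j))
    (fun j j' h => congrArg Prod.fst (hu _ h)) (fun j => hu_S _ _) hi_inj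

theorem rx_multipartite_eq_k_or_succ_general (k ℓ r : ℕ) (hr : 3 ≤ r) (hrk : r ≤ k) (hℓ : 1 ≤ ℓ) :
    ∃ N : ℕ, 0 < N ∧ ∀ n : ℕ, N ≤ n →
      rainbowIndex (completeMultipartiteGraph (fun _ : Fin r => Fin n)) k ℓ = k ∨
      rainbowIndex (completeMultipartiteGraph (fun _ : Fin r => Fin n)) k ℓ = k + 1 := by
  obtain ⟨N, hN⟩ := eventually_atTop.mp
    (eventually_exists_hasRainbowSTrees (k := k) (by omega : 2 ≤ r) hℓ)
  refine ⟨max N k, by omega, fun n hn => ?_⟩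
  obtain ⟨c, hc⟩ := hN n (le_of_max_le_left hn)
  have hupper : rainbowIndex (completeMultipartiteGraph fun _ : Fin r => Fin n) k ℓ ≤ k + 1 :=
    Nat.sInf_le ⟨c, hc⟩
  have hlower : k ≤ rainbowIndex (completeMultipartiteGraph fun _ : Fin r => Fin n) k ℓ :=
    le_csInf ⟨k + 1, c, hc⟩ fun t ⟨c', hc'⟩ => by
      simpa using le_card_of_hasRainbowSTrees (i := ⟨0, by omega⟩) (by omega) hℓ
        (by simpa using le_of_max_le_right hn) hc'
  omega

theorem rx_multipartite_eq_k_or_succ (k ℓ r : ℕ) (hr : 3 ≤ r) (hrk : r ≤ k) (hℓ : 1 ≤ ℓ)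
    (hℓ' : (ℓ : ℚ) ≤ (r.choose 2 : ℚ) * (⌈(k : ℚ) / (r : ℚ)⌉ : ℚ) ^ 2 /
      (⌊(k : ℚ) / (r : ℚ)⌋ : ℚ)) :
    ∃ N : ℕ, 0 < N ∧ ∀ n : ℕ, N ≤ n →
      rainbowIndex (completeMultipartiteGraph (fun _ : Fin r => Fin n)) k ℓ = k ∨
      rainbowIndex (completeMultipartiteGraph (fun _ : Fin r => Fin n)) k ℓ = k + 1 :=
  rx_multipartite_eq_k_or_succ_general k ℓ r hr hrk hℓ
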